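/- arXiv:1701.01800 — 4 statements merged into one kernel-verified Lean document; each statement's English description precedes it below -/
import Mathlib

section
/- Fix D ≥ 0 and ε, δ ∈ [0,1), and assume G^δ_{D,ε}(X) < +∞ (i.e., some channel P_{Y|X} satisfies Pr{d(X,Y) > D} ≤ ε). Then there exists a (D, R, ε, δ) code (with a possibly stochastic encoder) whose rate is R = ⌊G^δ_{D,ε}(X)⌋. -/
open scoped ENNReal
open MeasureTheory

noncomputable section

/-- The smooth max entropy `H^δ(P)` (base 2) of a probability distribution `P`
on a finite alphabet `𝒴`: the least `log₂ |𝒲|` over subsets `𝒲 ⊆ 𝒴` of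
probability at least `1 - δ`. -/
def smoothMaxEnt {𝒴 : Type} [Fintype 𝒴] (P : 𝒴 → ℝ≥0∞) (δ : ℝ) : ℝ :=
  sInf {r : ℝ | ∃ W : Finset 𝒴,
    ENNReal.ofReal (1 - δ) ≤ ∑ y ∈ W, P y ∧ r = Real.logb 2 (W.card)}

/-- A channel (conditional probability distribution) from `𝒳` to `𝒴`. -/
def IsChannel {𝒳 𝒴 : Type} [Fintype 𝒴] (W : 𝒳 → 𝒴 → ℝ≥0∞) : Prop :=
  ∀ x, ∑ y, W x y = 1

/-- The output marginal distribution of the channel `W` with input distribution `pX`. -/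
def marginal {𝒳 𝒴 : Type} [Fintype 𝒳] (pX : 𝒳 → ℝ≥0∞) (W : 𝒳 → 𝒴 → ℝ≥0∞) : 𝒴 → ℝ≥0∞ :=
  fun y => ∑ x, pX x * W x y

/-- `Pr{d(X,Y) > D}` for the joint law `pX · W`. -/
def chExcess {𝒳 𝒴 : Type} [Fintype 𝒳] [Fintype 𝒴] (pX : 𝒳 → ℝ≥0∞) (W : 𝒳 → 𝒴 → ℝ≥0∞)
    (d : 𝒳 → 𝒴 → ℝ) (D : ℝ) : ℝ≥0∞ :=
  ∑ x, ∑ y, if D < d x y then pX x * W x y else 0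

/-- The quantity `G^δ_{D,ε}(X)` as a value in `[0,∞]`: the infimum of the smooth max
entropy of the output marginal, over channels whose excess-distortion probability is
at most `ε`; it equals `+∞` if no such channel exists. -/
def Gq {𝒳 𝒴 : Type} [Fintype 𝒳] [Fintype 𝒴] (pX : 𝒳 → ℝ≥0∞) (d : 𝒳 → 𝒴 → ℝ)
    (D ε δ : ℝ) : ℝ≥0∞ :=
  ⨅ (W : 𝒳 → 𝒴 → ℝ≥0∞) (_ : IsChannel W) (_ : chExcess pX W d D ≤ ENNReal.ofReal ε),
    ENNReal.ofReal (smoothMaxEnt (marginal pX W) δ)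

/-- `(f, g)` is a `(D, R, ε, δ)` code: `f` is a (possibly stochastic) encoder assigning
to each source symbol a probability distribution on binary strings (`List Bool`),
`g` is a decoder, the excess distortion probability is at most `ε`, and the
overflow probability is at most `δ`. -/
def IsCode {𝒳 𝒴 : Type} [Fintype 𝒳] (pX : 𝒳 → ℝ≥0∞) (d : 𝒳 → 𝒴 → ℝ)
    (D R ε δ : ℝ) (f : 𝒳 → List Bool → ℝ≥0∞) (g : List Bool → 𝒴) : Prop :=
  (∀ x, ∑' w : List Bool, f x w = 1) ∧
  (∑ x, ∑' w : List Bool, (if D < d x (g w) then pX x * f x w else 0))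
      ≤ ENNReal.ofReal ε ∧
  (∑ x, ∑' w : List Bool, (if R < (w.length : ℝ) then pX x * f x w else 0))
      ≤ ENNReal.ofReal δ

/-- The deterministic encoder `f : 𝒳 → {0,1}*` viewed as a stochastic encoder. -/
def detEnc {𝒳 : Type} (f : 𝒳 → List Bool) : 𝒳 → List Bool → ℝ≥0∞ :=
  fun x w => if w = f x then 1 else 0

/-- The sum of the `j` largest values of `P`. -/
def topSum {𝒴 : Type} [Fintype 𝒴] (P : 𝒴 → ℝ≥0∞) (j : ℕ) : ℝ≥0∞ :=
  ⨆ (W : Finset 𝒴) (_ : W.card ≤ j), ∑ y ∈ W, P y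

/-!
Take a channel `W` and a set `𝒲` of probability at least `1 - δ` under the output marginal
that realise `G = G^δ_{D,ε}(X)`; the infimum is attained because the smooth max entropy only
takes the finitely many values `log₂ n`, `n ≤ |𝒴|`. Since `log₂ |𝒲| ≤ G`, we have
`|𝒲| ≤ 2 ^ (⌊G⌋ + 1) - 1`, the number of binary strings of length at most `⌊G⌋`.
So there is an injective labelling `e : 𝒴 → {0,1}*` giving the elements of `𝒲` labels of
length at most `⌊G⌋`. The encoder draws `Y ~ W(· | x)` and sends `e Y`; the decoder inverts
`e`. Distortion is then exactly that of the channel, and overflow happens only when `Y ∉ 𝒲`.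
-/

open Function

/-- Bijective base-2 numeration, least significant digit first, with the digits `1, 2` written
as `false, true`. -/
def bijBinary : ℕ → List Bool
  | 0 => []
  | n + 1 => (n % 2 == 1) :: bijBinary (n / 2)
  decreasing_by exact Nat.lt_succ_of_le (Nat.div_le_self n 2)

def bijBinaryVal : List Bool → ℕ :=
  List.foldr (fun b n => 2 * n + if b then 2 else 1) 0

lemma leftInverse_bijBinaryVal_bijBinary : LeftInverse bijBinaryVal bijBinary := by
  intro k
  induction k using Nat.strong_induction_on with
  | _ k ih =>
    match k with
    | 0 => rw [bijBinary]; rfl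
    | n + 1 =>
      have hval : bijBinaryVal (bijBinary (n / 2)) = n / 2 := ih (n / 2) (by omega)
      rw [bijBinary, bijBinaryVal, List.foldr_cons, ← bijBinaryVal, hval]
      rcases Nat.mod_two_eq_zero_or_one n with h | h <;> simp [h] <;> omega

lemma bijBinary_injective : Injective bijBinary :=
  leftInverse_bijBinaryVal_bijBinary.injective

lemma two_pow_length_bijBinary_le (k : ℕ) : 2 ^ (bijBinary k).length ≤ k + 1 := by
  induction k using Nat.strong_induction_on with
  | _ k ih =>
    match k with
    | 0 => simp [bijBinary]
    | n + 1 =>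
      have h := ih (n / 2) (by omega)
      rw [bijBinary, List.length_cons, pow_succ]
      omega

lemma exists_injective_nat_lt_card {α : Type*} [Fintype α] [DecidableEq α] (s : Finset α) :
    ∃ i : α → ℕ, Injective i ∧ ∀ y ∈ s, i y < s.card := by
  let l := s.toList ++ sᶜ.toList
  have hl : ∀ y, y ∈ l := fun y => by by_cases hy : y ∈ s <;> simp [l, hy]
  refine ⟨fun y => l.idxOf y, fun a b hab => (List.idxOf_inj (hl a)).mp hab, fun y hy => ?_⟩
  have hy' : y ∈ s.toList := Finset.mem_toList.mpr hy
  simpa [l, List.idxOf_append_of_mem hy'] using List.idxOf_lt_length_of_mem hy'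

lemma exists_injective_length_le {α : Type*} [Fintype α] (s : Finset α) {m : ℕ}
    (hs : s.card < 2 ^ (m + 1)) :
    ∃ e : α → List Bool, Injective e ∧ ∀ y ∈ s, (e y).length ≤ m := by
  classical
  obtain ⟨i, hi, his⟩ := exists_injective_nat_lt_card s
  refine ⟨bijBinary ∘ i, bijBinary_injective.comp hi, fun y hy => ?_⟩
  have hlt : 2 ^ (bijBinary (i y)).length < 2 ^ (m + 1) :=
    (two_pow_length_bijBinary_le (i y)).trans_lt (by linarith [his y hy])
  exact Nat.lt_succ_iff.mp ((Nat.pow_lt_pow_iff_right (by norm_num)).mp hlt)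

lemma lt_two_pow_floor_add_one_of_logb_le {n : ℕ} {G : ℝ} (h : Real.logb 2 n ≤ G) :
    n < 2 ^ (⌊G⌋₊ + 1) := by
  rcases Nat.eq_zero_or_pos n with rfl | hn
  · exact Nat.two_pow_pos _
  have hlt : Real.logb 2 n < ((⌊G⌋₊ + 1 : ℕ) : ℝ) := by
    push_cast
    exact h.trans_lt (Nat.lt_floor_add_one G)
  rw [Real.logb_lt_iff_lt_rpow one_lt_two (by exact_mod_cast hn), Real.rpow_natCast] at hlt
  exact_mod_cast hlt

lemma sum_compl_le_ofReal {𝒴 : Type} [Fintype 𝒴] [DecidableEq 𝒴] {P : 𝒴 → ℝ≥0∞}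
    (hP : ∑ y, P y = 1) {s : Finset 𝒴} {δ : ℝ} (hs : ENNReal.ofReal (1 - δ) ≤ ∑ y ∈ s, P y) :
    ∑ y ∈ sᶜ, P y ≤ ENNReal.ofReal δ := by
  have h : ∑ y ∈ sᶜ, P y + ENNReal.ofReal (1 - δ) ≤ ENNReal.ofReal δ + ENNReal.ofReal (1 - δ) :=
    calc ∑ y ∈ sᶜ, P y + ENNReal.ofReal (1 - δ) ≤ ∑ y ∈ sᶜ, P y + ∑ y ∈ s, P y := by gcongr
      _ = 1 := by rw [add_comm, Finset.sum_add_sum_compl, hP]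
      _ = ENNReal.ofReal (δ + (1 - δ)) := by norm_num
      _ ≤ ENNReal.ofReal δ + ENNReal.ofReal (1 - δ) := ENNReal.ofReal_add_le
  exact (ENNReal.add_le_add_iff_right ENNReal.ofReal_ne_top).mp h

section Channel

variable {𝒳 𝒴 : Type} [Fintype 𝒴]

lemma exists_smoothMaxEnt_eq_logb {P : 𝒴 → ℝ≥0∞} (hP : ∑ y, P y = 1) {δ : ℝ} (hδ : 0 ≤ δ) :
    ∃ s : Finset 𝒴, ENNReal.ofReal (1 - δ) ≤ ∑ y ∈ s, P y ∧
      smoothMaxEnt P δ = Real.logb 2 s.card := by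
  let S := {r : ℝ | ∃ s : Finset 𝒴,
    ENNReal.ofReal (1 - δ) ≤ ∑ y ∈ s, P y ∧ r = Real.logb 2 s.card}
  have hne : S.Nonempty :=
    ⟨_, Finset.univ, by rw [hP]; exact ENNReal.ofReal_le_one.mpr (by linarith), rfl⟩
  exact hne.csInf_mem ((Set.finite_range fun s : Finset 𝒴 => Real.logb 2 s.card).subset
    fun r ⟨s, _, hr⟩ => ⟨s, hr.symm⟩)

lemma smoothMaxEnt_mem_image_logb {P : 𝒴 → ℝ≥0∞} (hP : ∑ y, P y = 1) {δ : ℝ} (hδ : 0 ≤ δ) :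
    smoothMaxEnt P δ ∈ (fun n : ℕ => Real.logb 2 n) '' Set.Iic (Fintype.card 𝒴) := by
  obtain ⟨s, -, hs⟩ := exists_smoothMaxEnt_eq_logb hP hδ
  exact ⟨s.card, Finset.card_le_univ s, hs.symm⟩

def channelEnc (W : 𝒳 → 𝒴 → ℝ≥0∞) (e : 𝒴 → List Bool) : 𝒳 → List Bool → ℝ≥0∞ :=
  fun x w => ∑ y, if w = e y then W x y else 0

lemma tsum_mul_channelEnc (W : 𝒳 → 𝒴 → ℝ≥0∞) (e : 𝒴 → List Bool) (φ : List Bool → ℝ≥0∞)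
    (x : 𝒳) : ∑' w, φ w * channelEnc W e x w = ∑ y, φ (e y) * W x y := by
  simp_rw [channelEnc, Finset.mul_sum, mul_ite, mul_zero]
  rw [Summable.tsum_finsetSum fun _ _ => ENNReal.summable]
  simp_rw [tsum_ite_eq]

lemma tsum_ite_mul_channelEnc (W : 𝒳 → 𝒴 → ℝ≥0∞) (e : 𝒴 → List Bool) (c : List Bool → Prop)
    [DecidablePred c] (a : ℝ≥0∞) (x : 𝒳) :
    ∑' w, (if c w then a * channelEnc W e x w else 0) =
      ∑ y, if c (e y) then a * W x y else 0 := by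
  simpa only [ite_mul, zero_mul, mul_assoc] using
    tsum_mul_channelEnc W e (fun w => if c w then a else 0) x

variable [Fintype 𝒳] {pX : 𝒳 → ℝ≥0∞} {d : 𝒳 → 𝒴 → ℝ} {D ε δ : ℝ}

lemma sum_marginal (hpX : ∑ x, pX x = 1) {W : 𝒳 → 𝒴 → ℝ≥0∞} (hW : IsChannel W) :
    ∑ y, marginal pX W y = 1 := by
  unfold marginal
  rw [Finset.sum_comm]
  simp only [← Finset.mul_sum, show ∀ x, ∑ y, W x y = 1 from hW, mul_one, hpX]

lemma exists_channel_eq_Gq (hpX : ∑ x, pX x = 1) (hδ : 0 ≤ δ) (hG : Gq pX d D ε δ ≠ ⊤) :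
    ∃ W : 𝒳 → 𝒴 → ℝ≥0∞, IsChannel W ∧ chExcess pX W d D ≤ ENNReal.ofReal ε ∧
      ENNReal.ofReal (smoothMaxEnt (marginal pX W) δ) = Gq pX d D ε δ := by
  let S := {W : 𝒳 → 𝒴 → ℝ≥0∞ | IsChannel W ∧ chExcess pX W d D ≤ ENNReal.ofReal ε}
  let F := fun W : 𝒳 → 𝒴 → ℝ≥0∞ => ENNReal.ofReal (smoothMaxEnt (marginal pX W) δ)
  have hGq : Gq pX d D ε δ = sInf (F '' S) := by
    simp only [Gq, sInf_image, S, F, Set.mem_ofPred_eq, iInf_and]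
  have hS : S.Nonempty := by
    by_contra hS
    rw [Set.not_nonempty_iff_eq_empty] at hS
    exact hG (by rw [hGq, hS, Set.image_empty, sInf_empty])
  have hfin : (F '' S).Finite :=
    (((Set.finite_Iic (Fintype.card 𝒴)).image fun n : ℕ => Real.logb 2 n).image
      ENNReal.ofReal).subset fun _ ⟨W, hW, hFW⟩ =>
        hFW ▸ Set.mem_image_of_mem _ (smoothMaxEnt_mem_image_logb (sum_marginal hpX hW.1) hδ)
  obtain ⟨W, hW, hFW⟩ := (hS.image F).csInf_mem hfin
  exact ⟨W, hW.1, hW.2, hFW.trans hGq.symm⟩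

lemma isCode_channelEnc [DecidableEq 𝒴] (hpX : ∑ x, pX x = 1) {W : 𝒳 → 𝒴 → ℝ≥0∞}
    (hW : IsChannel W) (hexc : chExcess pX W d D ≤ ENNReal.ofReal ε) {s : Finset 𝒴}
    (hs : ENNReal.ofReal (1 - δ) ≤ ∑ y ∈ s, marginal pX W y) {e : 𝒴 → List Bool}
    {g : List Bool → 𝒴} (hge : LeftInverse g e) {R : ℝ} (hR : ∀ y ∈ s, ((e y).length : ℝ) ≤ R) :
    IsCode pX d D R ε δ (channelEnc W e) g := by
  refine ⟨fun x => ?_, ?_, ?_⟩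
  · simpa only [one_mul, hW x] using tsum_mul_channelEnc W e (fun _ => 1) x
  · simpa only [tsum_ite_mul_channelEnc, hge _, chExcess] using hexc
  · calc ∑ x, ∑' w, (if R < (w.length : ℝ) then pX x * channelEnc W e x w else 0)
        = ∑ x, ∑ y ∈ {y | R < ((e y).length : ℝ)}, pX x * W x y := by
          simp only [tsum_ite_mul_channelEnc, Finset.sum_filter]
      _ ≤ ∑ x, ∑ y ∈ sᶜ, pX x * W x y := by
          gcongr with x
          exact fun y hy => Finset.mem_compl.mpr fun hys =>
            (Finset.mem_filter.mp hy).2.not_ge (hR y hys)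
      _ = ∑ y ∈ sᶜ, marginal pX W y := Finset.sum_comm
      _ ≤ ENNReal.ofReal δ := sum_compl_le_ofReal (sum_marginal hpX hW) hs

end Channel

theorem stmt0_general {𝒳 𝒴 : Type} [Fintype 𝒳] [Fintype 𝒴] [Nonempty 𝒴]
    (pX : 𝒳 → ℝ≥0∞) (hpX : ∑ x, pX x = 1)
    (d : 𝒳 → 𝒴 → ℝ)
    (D ε δ : ℝ) (hδ : 0 ≤ δ ∧ δ < 1)
    (hG : Gq pX d D ε δ ≠ ⊤) :
    ∃ (f : 𝒳 → List Bool → ℝ≥0∞) (g : List Bool → 𝒴),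
      IsCode pX d D ((⌊(Gq pX d D ε δ).toReal⌋ : ℤ) : ℝ) ε δ f g := by
  classical
  obtain ⟨W, hW, hexc, hWG⟩ := exists_channel_eq_Gq hpX hδ.1 hG
  obtain ⟨s, hs, hsW⟩ := exists_smoothMaxEnt_eq_logb (sum_marginal hpX hW) hδ.1
  have hlog : Real.logb 2 s.card ≤ (Gq pX d D ε δ).toReal := by
    rw [← hsW, ← hWG, ENNReal.toReal_ofReal']
    exact le_max_left _ _
  obtain ⟨e, he, hlen⟩ := exists_injective_length_le s (lt_two_pow_floor_add_one_of_logb_le hlog)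
  refine ⟨channelEnc W e, invFun e,
    isCode_channelEnc hpX hW hexc hs (leftInverse_invFun he) fun y hy => ?_⟩
  rw [← Int.natCast_floor_eq_floor ENNReal.toReal_nonneg]
  exact_mod_cast hlen y hy

/-- Achievability with a possibly stochastic encoder: if `G^δ_{D,ε}(X) < ∞`, there is a
`(D, R, ε, δ)` code with rate `R = ⌊G^δ_{D,ε}(X)⌋`. -/
theorem stmt0 {𝒳 𝒴 : Type} [Fintype 𝒳] [Fintype 𝒴] [Nonempty 𝒳] [Nonempty 𝒴]
    (pX : 𝒳 → ℝ≥0∞) (hpX : ∑ x, pX x = 1)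
    (d : 𝒳 → 𝒴 → ℝ) (hd : ∀ x y, 0 ≤ d x y)
    (D ε δ : ℝ) (hD : 0 ≤ D) (hε : 0 ≤ ε ∧ ε < 1) (hδ : 0 ≤ δ ∧ δ < 1)
    (hG : Gq pX d D ε δ ≠ ⊤) :
    ∃ (f : 𝒳 → List Bool → ℝ≥0∞) (g : List Bool → 𝒴),
      IsCode pX d D ((⌊(Gq pX d D ε δ).toReal⌋ : ℤ) : ℝ) ε δ f g :=
  stmt0_general pX hpX d D ε δ hδ hG
end
end

section
/- Fix D ≥ 0 and ε, δ ∈ [0,1), and assume G^δ_{D,ε}(X) < +∞. Then every (D, R, ε, δ) code (with a possibly stochastic encoder) satisfies R > G^δ_{D,ε}(X) − 1. -/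
/-!
The encoder and decoder of a code together form a channel `x ↦ law of g(f(x))`, whose
excess-distortion probability is that of the code, so it competes in the infimum defining
`G^δ_{D,ε}(X)`. Since `Pr{ℓ(f(X)) ≤ R} ≥ 1 - δ`, its output marginal puts mass at least
`1 - δ` on the decoded images of the fewer than `2^(⌊R⌋+1)` strings of length at most `⌊R⌋`,
so `G^δ_{D,ε}(X) ≤ H^δ(Y) < ⌊R⌋ + 1 ≤ R + 1`.
-/

open scoped ENNReal
open MeasureTheory

noncomputable section

def codeChannel {𝒳 𝒴 : Type} [DecidableEq 𝒴] (f : 𝒳 → List Bool → ℝ≥0∞) (g : List Bool → 𝒴) :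
    𝒳 → 𝒴 → ℝ≥0∞ :=
  fun x y => ∑' w, if g w = y then f x w else 0

def boundedStrings (n : ℕ) : Finset (List Bool) :=
  (Finset.range (n + 1)).biUnion fun k => Finset.univ.image (List.ofFn : (Fin k → Bool) → _)

section ChangeOfVariables

variable {α β : Type*} [DecidableEq β]

theorem sum_mul_tsum_ite_eq (g : α → β) (h : α → ℝ≥0∞) (c : β → ℝ≥0∞) (s : Finset β) :
    ∑ y ∈ s, c y * ∑' w, (if g w = y then h w else 0)
      = ∑' w, if g w ∈ s then c (g w) * h w else 0 := by
  simp_rw [← ENNReal.tsum_mul_left, mul_ite, mul_zero]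
  rw [← Summable.tsum_finsetSum fun _ _ => ENNReal.summable]
  exact tsum_congr fun w => Finset.sum_ite_eq s (g w) fun y => c y * h w

theorem sum_mul_tsum_ite_eq_univ [Fintype β] (g : α → β) (h : α → ℝ≥0∞) (c : β → ℝ≥0∞) :
    ∑ y, c y * ∑' w, (if g w = y then h w else 0) = ∑' w, c (g w) * h w := by
  simp [sum_mul_tsum_ite_eq]

end ChangeOfVariables

section CodeChannel

variable {𝒳 𝒴 : Type} [DecidableEq 𝒴] {f : 𝒳 → List Bool → ℝ≥0∞} {g : List Bool → 𝒴}

theorem isChannel_codeChannel [Fintype 𝒴] (hf : ∀ x, ∑' w, f x w = 1) :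
    IsChannel (codeChannel f g) := by
  intro x
  simpa [codeChannel, hf x] using sum_mul_tsum_ite_eq_univ g (f x) 1

theorem chExcess_codeChannel [Fintype 𝒳] [Fintype 𝒴] (pX : 𝒳 → ℝ≥0∞) (d : 𝒳 → 𝒴 → ℝ)
    (D : ℝ) :
    chExcess pX (codeChannel f g) d D
      = ∑ x, ∑' w, if D < d x (g w) then pX x * f x w else 0 := by
  refine Finset.sum_congr rfl fun x _ => ?_
  simp_rw [← ite_zero_mul, codeChannel, sum_mul_tsum_ite_eq_univ]

theorem sum_marginal_codeChannel [Fintype 𝒳] (pX : 𝒳 → ℝ≥0∞) (s : Finset 𝒴) :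
    ∑ y ∈ s, marginal pX (codeChannel f g) y
      = ∑ x, ∑' w, if g w ∈ s then pX x * f x w else 0 := by
  simp only [marginal]
  rw [Finset.sum_comm]
  exact Finset.sum_congr rfl fun x _ => sum_mul_tsum_ite_eq g (f x) (fun _ => pX x) s

end CodeChannel

theorem ofReal_one_sub_le_sum_tsum_ite_not {𝒳 α : Type} [Fintype 𝒳] {pX : 𝒳 → ℝ≥0∞}
    {f : 𝒳 → α → ℝ≥0∞} {δ : ℝ} (hpX : ∑ x, pX x = 1) (hf : ∀ x, ∑' w, f x w = 1)
    (hδ : 0 ≤ δ) (p : α → Prop) [DecidablePred p]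
    (hp : ∑ x, ∑' w, (if p w then pX x * f x w else 0) ≤ ENNReal.ofReal δ) :
    ENNReal.ofReal (1 - δ) ≤ ∑ x, ∑' w, if p w then 0 else pX x * f x w := by
  have hsplit : (∑ x, ∑' w, if p w then 0 else pX x * f x w)
      + ∑ x, ∑' w, (if p w then pX x * f x w else 0) = 1 := by
    rw [← Finset.sum_add_distrib, ← hpX]
    refine Finset.sum_congr rfl fun x _ => ?_
    conv_rhs => rw [← mul_one (pX x), ← hf x, ← ENNReal.tsum_mul_left]
    rw [← ENNReal.tsum_add]
    exact tsum_congr fun w => by split_ifs <;> simp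
  rw [ENNReal.ofReal_sub _ hδ, ENNReal.ofReal_one, tsub_le_iff_right, ← hsplit]
  gcongr

theorem mem_boundedStrings {n : ℕ} {w : List Bool} : w ∈ boundedStrings n ↔ w.length ≤ n := by
  simp only [boundedStrings, Finset.mem_biUnion, Finset.mem_range, Finset.mem_image,
    Finset.mem_univ, true_and]
  constructor
  · rintro ⟨k, hk, v, rfl⟩
    simpa using Nat.le_of_lt_succ hk
  · exact fun hw => ⟨w.length, Nat.lt_succ_of_le hw, w.get, List.ofFn_get w⟩

theorem card_boundedStrings_lt (n : ℕ) : (boundedStrings n).card < 2 ^ (n + 1) :=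
  calc (boundedStrings n).card
      ≤ ∑ k ∈ Finset.range (n + 1), 2 ^ k :=
        Finset.card_biUnion_le.trans <| Finset.sum_le_sum fun k _ =>
          Finset.card_image_le.trans (by simp)
    _ < 2 ^ (n + 1) := Nat.geomSum_lt le_rfl fun _ => Finset.mem_range.1

theorem logb_two_natCast_nonneg (m : ℕ) : 0 ≤ Real.logb 2 m :=
  div_nonneg (Real.log_natCast_nonneg m) (Real.log_nonneg one_le_two)

theorem logb_two_natCast_lt {m k : ℕ} (h : m < 2 ^ (k + 1)) : Real.logb 2 m < k + 1 := by
  rcases Nat.eq_zero_or_pos m with rfl | hm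
  · simp only [Nat.cast_zero, Real.logb_zero]
    positivity
  rw [Real.logb_lt_iff_lt_rpow one_lt_two (by exact_mod_cast hm), ← Nat.cast_succ,
    Real.rpow_natCast]
  exact_mod_cast h

section SmoothMaxEnt

variable {𝒴 : Type} [Fintype 𝒴] {P : 𝒴 → ℝ≥0∞} {δ : ℝ}

theorem smoothMaxEnt_nonneg : 0 ≤ smoothMaxEnt P δ :=
  Real.sInf_nonneg fun _ ⟨_, _, hr⟩ => hr ▸ logb_two_natCast_nonneg _

theorem smoothMaxEnt_le {W : Finset 𝒴} (hW : ENNReal.ofReal (1 - δ) ≤ ∑ y ∈ W, P y) :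
    smoothMaxEnt P δ ≤ Real.logb 2 W.card :=
  csInf_le ⟨0, fun _ ⟨_, _, hr⟩ => hr ▸ logb_two_natCast_nonneg _⟩ ⟨W, hW, rfl⟩

end SmoothMaxEnt

theorem toReal_Gq_le {𝒳 𝒴 : Type} [Fintype 𝒳] [Fintype 𝒴] {pX : 𝒳 → ℝ≥0∞}
    {d : 𝒳 → 𝒴 → ℝ} {D ε δ : ℝ} {W : 𝒳 → 𝒴 → ℝ≥0∞} (hW : IsChannel W)
    (hexc : chExcess pX W d D ≤ ENNReal.ofReal ε) :
    (Gq pX d D ε δ).toReal ≤ smoothMaxEnt (marginal pX W) δ := by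
  rw [← ENNReal.toReal_ofReal smoothMaxEnt_nonneg]
  exact ENNReal.toReal_mono ENNReal.ofReal_ne_top (iInf₂_le_of_le W hW (iInf_le _ hexc))

theorem stmt1_general {𝒳 𝒴 : Type} [Fintype 𝒳] [Fintype 𝒴]
    (pX : 𝒳 → ℝ≥0∞) (hpX : ∑ x, pX x = 1)
    (d : 𝒳 → 𝒴 → ℝ)
    (D ε δ : ℝ) (hδ : 0 ≤ δ ∧ δ < 1)
    (R : ℝ) (hR : 0 ≤ R) (f : 𝒳 → List Bool → ℝ≥0∞) (g : List Bool → 𝒴)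
    (hcode : IsCode pX d D R ε δ f g) :
    (Gq pX d D ε δ).toReal - 1 < R := by
  classical
  obtain ⟨hf, hexc, hovf⟩ := hcode
  set n := ⌊R⌋₊
  set Y := (boundedStrings n).image g
  have hY : ENNReal.ofReal (1 - δ) ≤ ∑ y ∈ Y, marginal pX (codeChannel f g) y := by
    refine (ofReal_one_sub_le_sum_tsum_ite_not hpX hf hδ.1 _ hovf).trans ?_
    rw [sum_marginal_codeChannel]
    refine Finset.sum_le_sum fun x _ => ENNReal.tsum_le_tsum fun w => ?_
    by_cases hlong : R < (w.length : ℝ)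
    · simp [hlong]
    have hmem : g w ∈ Y :=
      Finset.mem_image_of_mem g (mem_boundedStrings.2 (Nat.le_floor (not_lt.1 hlong)))
    simp [hlong, hmem]
  have hYcard : Y.card < 2 ^ (n + 1) := Finset.card_image_le.trans_lt (card_boundedStrings_lt n)
  have hG := calc
    (Gq pX d D ε δ).toReal ≤ smoothMaxEnt (marginal pX (codeChannel f g)) δ :=
        toReal_Gq_le (isChannel_codeChannel hf) ((chExcess_codeChannel pX d D).trans_le hexc)
    _ ≤ Real.logb 2 Y.card := smoothMaxEnt_le hY
    _ < n + 1 := logb_two_natCast_lt hYcard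
  linarith [Nat.floor_le hR]

/-- Converse: if `G^δ_{D,ε}(X) < ∞`, every `(D, R, ε, δ)` code (possibly with a
stochastic encoder) satisfies `R > G^δ_{D,ε}(X) - 1`. -/
theorem stmt1 {𝒳 𝒴 : Type} [Fintype 𝒳] [Fintype 𝒴] [Nonempty 𝒳] [Nonempty 𝒴]
    (pX : 𝒳 → ℝ≥0∞) (hpX : ∑ x, pX x = 1)
    (d : 𝒳 → 𝒴 → ℝ) (hd : ∀ x y, 0 ≤ d x y)
    (D ε δ : ℝ) (hD : 0 ≤ D) (hε : 0 ≤ ε ∧ ε < 1) (hδ : 0 ≤ δ ∧ δ < 1)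
    (hG : Gq pX d D ε δ ≠ ⊤)
    (R : ℝ) (hR : 0 ≤ R) (f : 𝒳 → List Bool → ℝ≥0∞) (g : List Bool → 𝒴)
    (hcode : IsCode pX d D R ε δ f g) :
    (Gq pX d D ε δ).toReal - 1 < R :=
  stmt1_general pX hpX d D ε δ hδ R hR f g hcode

end
end

section
/- The smooth max entropy is Schur concave: let P and Q be probability distributions on a finite nonempty set 𝒴 with values arranged in decreasing order p₁ ≥ p₂ ≥ … ≥ p_m and q₁ ≥ q₂ ≥ … ≥ q_m (m = |𝒴|). If Σ_{i=1}^k p_i ≤ Σ_{i=1}^k q_i for every k = 1, …, m (i.e., Q majorizes P), then H^δ(Q) ≤ H^δ(P) for every δ ∈ [0,1). -/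
/-!
If `P(𝒲) ≥ 1 - δ`, then `P(𝒲)` is at most the sum of the `|𝒲|` largest values of `P`, which by
majorization is at most the sum of the `|𝒲|` largest values of `Q`. So the `|𝒲|` most likely
symbols under `Q` form a set of the same size and `Q`-probability at least `1 - δ`, and every
value in the infimum defining `H^δ(P)` is also attained in the one defining `H^δ(Q)`.
-/


open scoped ENNReal
open MeasureTheory

noncomputable section

open Finset

theorem Fin.val_le_val_of_strictMono {k m : ℕ} {g : Fin k → Fin m} (hg : StrictMono g)
    (i : Fin k) : (i : ℕ) ≤ g i := by
  have hsub : (Iic i).image g ⊆ Iic (g i) := by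
    rintro _ hx
    obtain ⟨j, hj, rfl⟩ := mem_image.1 hx
    exact mem_Iic.2 (hg.monotone (mem_Iic.1 hj))
  have := card_le_card hsub
  rw [card_image_of_injective _ hg.injective, Fin.card_Iic, Fin.card_Iic] at this
  omega

theorem Fin.filter_val_lt_eq_map_castLEEmb {k m : ℕ} (hkm : k ≤ m) :
    univ.filter (fun i : Fin m => (i : ℕ) < k) = univ.map (Fin.castLEEmb hkm) := by
  ext i
  simp only [mem_filter, mem_univ, true_and, mem_map, Fin.coe_castLEEmb]
  exact ⟨fun hi => ⟨⟨i, hi⟩, rfl⟩, by rintro ⟨j, rfl⟩; exact j.2⟩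

theorem Finset.sum_le_sum_filter_val_lt_card {α : Type*} [AddCommMonoid α] [PartialOrder α]
    [IsOrderedAddMonoid α] {m : ℕ} {g : Fin m → α} (hg : Antitone g) (S : Finset (Fin m)) :
    ∑ i ∈ S, g i ≤ ∑ i ∈ univ.filter (fun i : Fin m => (i : ℕ) < #S), g i := by
  have hS : #S ≤ m := by simpa using S.card_le_univ
  let emb := S.orderEmbOfFin rfl
  calc ∑ i ∈ S, g i = ∑ j : Fin #S, g (emb j) := by
        conv_lhs => rw [← S.map_orderEmbOfFin_univ rfl]
        rw [sum_map]
        rfl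
    _ ≤ ∑ j : Fin #S, g (Fin.castLE hS j) :=
        sum_le_sum fun j _ => hg (Fin.val_le_val_of_strictMono emb.strictMono j)
    _ = ∑ i ∈ univ.filter (fun i : Fin m => (i : ℕ) < #S), g i := by
        rw [Fin.filter_val_lt_eq_map_castLEEmb hS, sum_map]
        rfl

theorem exists_card_eq_sum_le_of_majorizes {𝒴 α : Type*} [AddCommMonoid α] [PartialOrder α]
    [IsOrderedAddMonoid α] {m : ℕ} {P Q : 𝒴 → α} (e f : Fin m ≃ 𝒴) (hPe : Antitone (P ∘ e))
    (hmaj : ∀ k : ℕ, 1 ≤ k → k ≤ m →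
      ∑ i ∈ univ.filter (fun i : Fin m => (i : ℕ) < k), P (e i)
        ≤ ∑ i ∈ univ.filter (fun i : Fin m => (i : ℕ) < k), Q (f i))
    (W : Finset 𝒴) : ∃ W' : Finset 𝒴, #W' = #W ∧ ∑ y ∈ W, P y ≤ ∑ y ∈ W', Q y := by
  rcases W.eq_empty_or_nonempty with rfl | hW
  · exact ⟨∅, rfl, by simp⟩
  have hWm : #W ≤ m := by
    simpa using (W.map e.symm.toEmbedding).card_le_univ
  refine ⟨(univ.filter (fun i : Fin m => (i : ℕ) < #W)).map f.toEmbedding, ?_, ?_⟩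
  · simp [Fin.filter_val_lt_eq_map_castLEEmb hWm]
  calc ∑ y ∈ W, P y = ∑ i ∈ W.map e.symm.toEmbedding, P (e i) := by simp [sum_map]
    _ ≤ ∑ i ∈ univ.filter (fun i : Fin m => (i : ℕ) < #W), P (e i) := by
        simpa using sum_le_sum_filter_val_lt_card hPe (W.map e.symm.toEmbedding)
    _ ≤ ∑ i ∈ univ.filter (fun i : Fin m => (i : ℕ) < #W), Q (f i) := hmaj _ hW.card_pos hWm
    _ = _ := (sum_map _ f.toEmbedding Q).symm

theorem smoothMaxEnt_le_of_forall_exists_card_eq {𝒴 : Type} [Fintype 𝒴] {P Q : 𝒴 → ℝ≥0∞}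
    {δ : ℝ} (hP : ∃ W : Finset 𝒴, ENNReal.ofReal (1 - δ) ≤ ∑ y ∈ W, P y)
    (hPQ : ∀ W : Finset 𝒴, ∃ W' : Finset 𝒴, #W' = #W ∧ ∑ y ∈ W, P y ≤ ∑ y ∈ W', Q y) :
    smoothMaxEnt Q δ ≤ smoothMaxEnt P δ := by
  obtain ⟨W₀, hW₀⟩ := hP
  refine le_csInf ⟨_, W₀, hW₀, rfl⟩ ?_
  rintro _ ⟨W, hW, rfl⟩
  obtain ⟨W', hcard, hle⟩ := hPQ W
  have hbdd : BddBelow {r : ℝ | ∃ W : Finset 𝒴,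
      ENNReal.ofReal (1 - δ) ≤ ∑ y ∈ W, Q y ∧ r = Real.logb 2 #W} := by
    refine ⟨0, ?_⟩
    rintro _ ⟨V, -, rfl⟩
    exact div_nonneg (Real.log_natCast_nonneg _) (Real.log_nonneg one_le_two)
  rw [← hcard]
  exact csInf_le hbdd ⟨W', hW.trans hle, rfl⟩

theorem stmt11_general {𝒴 : Type} [Fintype 𝒴]
    (P Q : 𝒴 → ℝ≥0∞) (hP : ∑ y, P y = 1)
    (e f : Fin (Fintype.card 𝒴) ≃ 𝒴)
    (hPe : ∀ i j : Fin (Fintype.card 𝒴), i ≤ j → P (e j) ≤ P (e i))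
    (hmaj : ∀ k : ℕ, 1 ≤ k → k ≤ Fintype.card 𝒴 →
      ∑ i ∈ Finset.univ.filter (fun i : Fin (Fintype.card 𝒴) => (i : ℕ) < k), P (e i)
        ≤ ∑ i ∈ Finset.univ.filter (fun i : Fin (Fintype.card 𝒴) => (i : ℕ) < k), Q (f i))
    (δ : ℝ) (hδ : 0 ≤ δ ∧ δ < 1) :
    smoothMaxEnt Q δ ≤ smoothMaxEnt P δ := by
  have huniv : ENNReal.ofReal (1 - δ) ≤ ∑ y, P y := by
    rw [hP]
    exact ENNReal.ofReal_le_one.2 (by linarith [hδ.1])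
  exact smoothMaxEnt_le_of_forall_exists_card_eq ⟨univ, huniv⟩
    (exists_card_eq_sum_le_of_majorizes e f hPe hmaj)

/-- Schur concavity of the smooth max entropy: if `Q` majorizes `P` (with the values
of `P` and `Q` enumerated in decreasing order by `e` and `f`, every partial sum of
the largest values of `P` is at most that of `Q`), then `H^δ(Q) ≤ H^δ(P)` for every
`δ ∈ [0,1)`. -/
theorem stmt11 {𝒴 : Type} [Fintype 𝒴] [Nonempty 𝒴]
    (P Q : 𝒴 → ℝ≥0∞) (hP : ∑ y, P y = 1) (hQ : ∑ y, Q y = 1)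
    (e f : Fin (Fintype.card 𝒴) ≃ 𝒴)
    (hPe : ∀ i j : Fin (Fintype.card 𝒴), i ≤ j → P (e j) ≤ P (e i))
    (hQf : ∀ i j : Fin (Fintype.card 𝒴), i ≤ j → Q (f j) ≤ Q (f i))
    (hmaj : ∀ k : ℕ, 1 ≤ k → k ≤ Fintype.card 𝒴 →
      ∑ i ∈ Finset.univ.filter (fun i : Fin (Fintype.card 𝒴) => (i : ℕ) < k), P (e i)
        ≤ ∑ i ∈ Finset.univ.filter (fun i : Fin (Fintype.card 𝒴) => (i : ℕ) < k), Q (f i))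
    (δ : ℝ) (hδ : 0 ≤ δ ∧ δ < 1) :
    smoothMaxEnt Q δ ≤ smoothMaxEnt P δ :=
  stmt11_general P Q hP e f hPe hmaj δ hδ

end
end

section
/- Fix D ≥ 0, R ≥ 0, and ε ∈ [0,1). If a (D, R, ε, 0) code exists (possibly with a stochastic encoder), then there exists a nonempty set C ⊆ 𝒴 with |C| ≤ 2^{⌊R⌋+1} − 1 such that Pr{min_{y ∈ C} d(X, y) > D} ≤ ε; i.e., from any variable-length code with zero overflow probability one can construct a fixed-length code of codeword length ⌊R⌋ + 1 whose excess distortion probability is at most ε. -/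
open scoped ENNReal
open MeasureTheory

noncomputable section

/-!
Zero overflow probability means that, almost surely, the encoder only emits strings of
length at most `⌊R⌋`. There are at most `2^{⌊R⌋+1} - 1` such strings, so their images
under the decoder form a codebook of that size; whenever every codeword is at distortion
above `D` from `x`, so in particular is the decoded word `g (f x)`, whence the excess
distortion probability of the codebook is bounded by that of the code.
-/

open Finset

section ListsOfLengthLE

variable (α : Type*) [Fintype α] [DecidableEq α]

def listsOfLengthLE (n : ℕ) : Finset (List α) :=
  (range (n + 1)).biUnion fun k => univ.image (List.ofFn : (Fin k → α) → List α)

variable {α}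

theorem mem_listsOfLengthLE {n : ℕ} {l : List α} : l ∈ listsOfLengthLE α n ↔ l.length ≤ n := by
  simp only [listsOfLengthLE, mem_biUnion, mem_range, mem_image, mem_univ, true_and]
  constructor
  · rintro ⟨k, hk, v, rfl⟩
    simpa [Nat.lt_succ_iff] using hk
  · intro hl
    exact ⟨l.length, Nat.lt_succ_of_le hl, l.get, List.ofFn_get l⟩

theorem card_listsOfLengthLE_le (n : ℕ) :
    #(listsOfLengthLE α n) ≤ ∑ k ∈ range (n + 1), Fintype.card α ^ k :=
  card_biUnion_le.trans <| sum_le_sum fun k _ =>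
    card_image_le.trans (by simp)

theorem card_listsOfLengthLE_bool_le (n : ℕ) :
    (#(listsOfLengthLE Bool n) : ℝ) ≤ 2 ^ (n + 1) - 1 := by
  have hgeom : ∑ k ∈ range (n + 1), (2 : ℝ) ^ k = 2 ^ (n + 1) - 1 := by
    have h := geom_sum_mul (2 : ℝ) (n + 1)
    norm_num at h
    exact h
  rw [← hgeom]
  exact_mod_cast card_listsOfLengthLE_le (α := Bool) n

end ListsOfLengthLE

namespace IsCode

variable {𝒳 𝒴 : Type} [Fintype 𝒳] {pX : 𝒳 → ℝ≥0∞} {d : 𝒳 → 𝒴 → ℝ} {D R ε : ℝ}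
  {f : 𝒳 → List Bool → ℝ≥0∞} {g : List Bool → 𝒴}

theorem mass_eq_zero_of_lt_length (hcode : IsCode pX d D R ε 0 f g) (x : 𝒳) {w : List Bool}
    (hw : R < w.length) : pX x * f x w = 0 := by
  have hover := hcode.2.2
  rw [ENNReal.ofReal_zero, nonpos_iff_eq_zero, sum_eq_zero_iff] at hover
  simpa [hw] using ENNReal.tsum_eq_zero.mp (hover x (mem_univ x)) w

theorem excess_le_of_forall_length_le {C : Finset 𝒴} (hcode : IsCode pX d D R ε 0 f g)
    (hC : ∀ w : List Bool, w.length ≤ R → g w ∈ C) (x : 𝒳) :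
    (if ∀ y ∈ C, D < d x y then pX x else 0) ≤
      ∑' w : List Bool, if D < d x (g w) then pX x * f x w else 0 := by
  split_ifs with hfar
  · calc pX x = ∑' w, pX x * f x w := by rw [ENNReal.tsum_mul_left, hcode.1 x, mul_one]
      _ ≤ _ := ENNReal.tsum_le_tsum fun w => by
        by_cases hlen : (w.length : ℝ) ≤ R
        · rw [if_pos (hfar _ (hC w hlen))]
        · rw [hcode.mass_eq_zero_of_lt_length x (not_le.mp hlen)]
          exact zero_le
  · exact zero_le

end IsCode

theorem stmt13_general {𝒳 𝒴 : Type} [Fintype 𝒳]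
    (pX : 𝒳 → ℝ≥0∞)
    (d : 𝒳 → 𝒴 → ℝ)
    (D R ε : ℝ) (hR : 0 ≤ R)
    (f : 𝒳 → List Bool → ℝ≥0∞) (g : List Bool → 𝒴)
    (hcode : IsCode pX d D R ε 0 f g) :
    ∃ C : Finset 𝒴, C.Nonempty ∧ (C.card : ℝ) ≤ (2 : ℝ) ^ (⌊R⌋ + 1) - 1 ∧
      (∑ x, if ∀ y ∈ C, D < d x y then pX x else 0) ≤ ENNReal.ofReal ε := by
  classical
  set n := ⌊R⌋₊
  have hmem : ∀ w : List Bool, w.length ≤ R → w ∈ listsOfLengthLE Bool n :=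
    fun w hw => mem_listsOfLengthLE.mpr (Nat.le_floor hw)
  refine ⟨(listsOfLengthLE Bool n).image g, ⟨g [], mem_image_of_mem g (hmem [] (by simpa))⟩,
    ?_, ?_⟩
  · rw [← Int.natCast_floor_eq_floor hR, ← Nat.cast_succ, zpow_natCast]
    exact (Nat.cast_le.mpr card_image_le).trans (card_listsOfLengthLE_bool_le n)
  · exact (sum_le_sum fun x _ => hcode.excess_le_of_forall_length_le
      (fun w hw => mem_image_of_mem g (hmem w hw)) x).trans hcode.2.1

/-- From any `(D, R, ε, 0)` code (possibly stochastic encoder, zero overflow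
probability) one can construct a fixed-length codebook `C ⊆ 𝒴` with
`|C| ≤ 2^{⌊R⌋+1} - 1` whose excess distortion probability is at most `ε`. -/
theorem stmt13 {𝒳 𝒴 : Type} [Fintype 𝒳] [Fintype 𝒴] [Nonempty 𝒳] [Nonempty 𝒴]
    (pX : 𝒳 → ℝ≥0∞) (hpX : ∑ x, pX x = 1)
    (d : 𝒳 → 𝒴 → ℝ) (hd : ∀ x y, 0 ≤ d x y)
    (D R ε : ℝ) (hD : 0 ≤ D) (hR : 0 ≤ R) (hε : 0 ≤ ε ∧ ε < 1)
    (f : 𝒳 → List Bool → ℝ≥0∞) (g : List Bool → 𝒴)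
    (hcode : IsCode pX d D R ε 0 f g) :
    ∃ C : Finset 𝒴, C.Nonempty ∧ (C.card : ℝ) ≤ (2 : ℝ) ^ (⌊R⌋ + 1) - 1 ∧
      (∑ x, if ∀ y ∈ C, D < d x y then pX x else 0) ≤ ENNReal.ofReal ε :=
  stmt13_general pX d D R ε hR f g hcode

end
end
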